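/- Let n ∈ ℕ+ and r = r(n). The truncation Γ_n = Γ/J_n is isomorphic as a K-algebra to A_n = K[x_1, …, x_r]/I_n. -/

import Mathlib

/-!
Let `K` be a field, `n ≥ 1`, and `r = r(n)` the number of primes `≤ n`.  The
truncation `Γ_n = Γ/J_n` of the ring `Γ` of number-theoretic functions
(implemented as `ArithmeticFunction K`, with `J_n` the ideal of functions
vanishing at all `m ≤ n`) is isomorphic, as a `K`-algebra, to
`A_n = K[x_1, …, x_r]/I_n`, where `I_n` is the monomial ideal generated by all
monomials of weight `> n`.
-/

/-- The ring homomorphism sending `c : K` to the arithmetic function supported at `1`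
with value `c`; it makes `ArithmeticFunction K` into a `K`-algebra. -/
noncomputable def numThAlgMap (K : Type*) [Field K] : K →+* ArithmeticFunction K where
  toFun c := ⟨fun n => if n = 1 then c else 0, by simp⟩
  map_one' := by
    ext n
    simp [ArithmeticFunction.one_apply]
  map_mul' c d := by
    ext n
    erw [ArithmeticFunction.mul_apply]
    simp only [ArithmeticFunction.coe_mk]
    have h : ∀ x ∈ n.divisorsAntidiagonal,
        (if x.1 = 1 then c else 0) * (if x.2 = 1 then d else 0)
          = if x = ((1, 1) : ℕ × ℕ) then c * d else 0 := by
      intro x _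
      rcases x with ⟨a, b⟩
      by_cases h1 : a = 1 <;> by_cases h2 : b = 1 <;> simp [h1, h2, Prod.ext_iff]
    rw [Finset.sum_congr rfl h,
      Finset.sum_ite_eq' n.divisorsAntidiagonal ((1, 1) : ℕ × ℕ) fun _ => c * d]
    by_cases hn : n = 1
    · subst hn; simp
    · simp [Nat.mem_divisorsAntidiagonal, hn, Ne.symm hn]
  map_zero' := by
    ext n
    simp
  map_add' c d := by
    ext n
    erw [ArithmeticFunction.add_apply]
    simp only [ArithmeticFunction.coe_mk]
    split <;> simp

noncomputable instance (K : Type*) [Field K] : Algebra K (ArithmeticFunction K) :=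
  (numThAlgMap K).toAlgebra

/-- The ideal `J_n` of number-theoretic functions vanishing at all `m ≤ n`. -/
def Jideal (K : Type*) [Field K] (n : ℕ) : Ideal (ArithmeticFunction K) where
  carrier := {f | ∀ m ≤ n, f m = 0}
  add_mem' := by
    intro f g hf hg m hm
    rw [ArithmeticFunction.add_apply, hf m hm, hg m hm, add_zero]
  zero_mem' := by
    intro m _
    simp
  smul_mem' := by
    intro g f hf m hm
    rw [smul_eq_mul, ArithmeticFunction.mul_apply]
    apply Finset.sum_eq_zero
    intro x hx
    rw [Nat.mem_divisorsAntidiagonal] at hx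
    have h2 : x.2 ∣ m := ⟨x.1, by rw [← hx.1, mul_comm]⟩
    have hle : x.2 ≤ m := Nat.le_of_dvd (Nat.pos_of_ne_zero hx.2) h2
    rw [hf x.2 (hle.trans hm), mul_zero]

/-- The weight `p_1^{a_1}⋯p_r^{a_r}` of the exponent vector `a` (0-indexed:
the variable `x_i` corresponds to the `i`-th prime `Nat.nth Nat.Prime i`,
with `Nat.nth Nat.Prime 0 = 2`). -/
noncomputable def weight {r : ℕ} (d : Fin r →₀ ℕ) : ℕ :=
  ∏ i : Fin r, (Nat.nth Nat.Prime (i : ℕ)) ^ d i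

/-- The monomial ideal `I_n` of `K[x_1, …, x_r]` generated by all monomials of
weight `> n`. -/
noncomputable def truncIdeal (K : Type*) [Field K] (n r : ℕ) : Ideal (MvPolynomial (Fin r) K) :=
  Ideal.span {m | ∃ d : Fin r →₀ ℕ, n < weight d ∧ m = MvPolynomial.monomial d (1 : K)}

section TruncAux

variable {K : Type*} [Field K]

/-- Indicator arithmetic function at `m`. -/
noncomputable def delta (K : Type*) [Field K] (m : ℕ) : ArithmeticFunction K :=
  ⟨fun k => if k = m ∧ m ≠ 0 then (1 : K) else 0, if_neg fun h => h.2 h.1.symm⟩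

lemma delta_apply (m k : ℕ) :
    delta K m k = if k = m ∧ m ≠ 0 then (1 : K) else 0 := rfl

lemma delta_zero : delta K 0 = 0 := by
  ext m; simp [delta_apply]

lemma delta_one : delta K 1 = 1 := by
  ext m; by_cases h : m = 1 <;> simp [delta_apply, ArithmeticFunction.one_apply, h]

lemma delta_mul (a b : ℕ) : delta K a * delta K b = delta K (a * b) := by
  by_cases ha : a = 0
  · subst ha; rw [delta_zero, zero_mul, Nat.zero_mul, delta_zero]
  by_cases hb : b = 0
  · subst hb; rw [delta_zero, mul_zero, Nat.mul_zero, delta_zero]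
  ext k
  rw [ArithmeticFunction.mul_apply]
  have h : ∀ x ∈ k.divisorsAntidiagonal,
      delta K a x.1 * delta K b x.2 = if x = ((a, b) : ℕ × ℕ) then (1 : K) else 0 := by
    intro x _
    rcases x with ⟨u, v⟩
    by_cases h1 : u = a <;> by_cases h2 : v = b <;>
      simp [delta_apply, h1, h2, ha, hb, Prod.ext_iff]
  rw [Finset.sum_congr rfl h,
    Finset.sum_ite_eq' k.divisorsAntidiagonal ((a, b) : ℕ × ℕ) fun _ => (1 : K)]
  rw [delta_apply]
  by_cases hk : k = a * b
  · subst hk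
    rw [if_pos, if_pos ⟨rfl, Nat.mul_ne_zero ha hb⟩]
    rw [Nat.mem_divisorsAntidiagonal]
    exact ⟨rfl, Nat.mul_ne_zero ha hb⟩
  · rw [if_neg, if_neg]
    · exact fun h' => hk h'.1
    · rw [Nat.mem_divisorsAntidiagonal]
      exact fun h' => hk h'.1.symm

/-- `delta` as a monoid hom. -/
noncomputable def deltaHom (K : Type*) [Field K] : ℕ →* ArithmeticFunction K where
  toFun := delta K
  map_one' := delta_one
  map_mul' := fun a b => (delta_mul a b).symm

lemma algebraMap_eq' : algebraMap K (ArithmeticFunction K) = numThAlgMap K := rfl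

lemma numThAlgMap_apply' (c : K) (k : ℕ) :
    numThAlgMap K c k = if k = 1 then c else 0 := rfl

lemma numThAlgMap_mul_apply (c : K) (f : ArithmeticFunction K) (k : ℕ) :
    (numThAlgMap K c * f) k = c * f k := by
  rw [ArithmeticFunction.mul_apply]
  have h : ∀ x ∈ k.divisorsAntidiagonal,
      (numThAlgMap K c) x.1 * f x.2 = if x = ((1, k) : ℕ × ℕ) then c * f k else 0 := by
    intro x hx
    rcases x with ⟨u, v⟩
    rw [Nat.mem_divisorsAntidiagonal] at hx
    by_cases h1 : u = 1
    · subst h1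
      have hv : v = k := by rw [← hx.1, one_mul]
      subst hv
      simp [numThAlgMap_apply']
    · simp [numThAlgMap_apply', h1, Prod.ext_iff]
  rw [Finset.sum_congr rfl h,
    Finset.sum_ite_eq' k.divisorsAntidiagonal ((1, k) : ℕ × ℕ) fun _ => c * f k]
  by_cases hk : k = 0
  · subst hk; simp
  · rw [if_pos]
    rw [Nat.mem_divisorsAntidiagonal]
    exact ⟨one_mul k, hk⟩

/-- Evaluation at a point, as an additive monoid hom. -/
def evalAt (K : Type*) [Field K] (k : ℕ) : ArithmeticFunction K →+ K where
  toFun f := f k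
  map_zero' := rfl
  map_add' f g := ArithmeticFunction.add_apply

lemma nth_prime_pos (i : ℕ) : 0 < Nat.nth Nat.Prime i := (Nat.prime_nth_prime i).pos

lemma weight_pos {r : ℕ} (d : Fin r →₀ ℕ) : 0 < weight d :=
  Finset.prod_pos fun i _ => pow_pos (nth_prime_pos i) _

lemma factorization_weight {r : ℕ} (d : Fin r →₀ ℕ) (j : Fin r) :
    (weight d).factorization (Nat.nth Nat.Prime (j : ℕ)) = d j := by
  unfold weight
  have hprod := Nat.factorization_prod (S := (Finset.univ : Finset (Fin r)))
    (g := fun i : Fin r => Nat.nth Nat.Prime (i : ℕ) ^ d i)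
    (fun i _ => (pow_pos (nth_prime_pos (i : ℕ)) _).ne')
  rw [hprod, Finset.sum_apply']
  have h : ∀ i : Fin r,
      ((Nat.nth Nat.Prime (i : ℕ)) ^ d i).factorization (Nat.nth Nat.Prime (j : ℕ))
        = if i = j then d i else 0 := by
    intro i
    rw [(Nat.prime_nth_prime (i : ℕ)).factorization_pow, Finsupp.single_apply]
    congr 1
    simp only [eq_iff_iff]
    constructor
    · intro h'
      exact Fin.ext (Nat.nth_injective Nat.infinite_setOf_prime h')
    · intro h'; rw [h']
  rw [Finset.sum_congr rfl fun i _ => h i]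
  simp

lemma weight_injective {r : ℕ} : Function.Injective (weight : (Fin r →₀ ℕ) → ℕ) := by
  intro d d' h
  ext j
  rw [← factorization_weight d j, ← factorization_weight d' j, h]

/-- Exponent vector of `m` (factorization at each of the first `r` primes). -/
noncomputable def fac (r m : ℕ) : Fin r →₀ ℕ :=
  Finsupp.equivFunOnFinite.symm fun i => m.factorization (Nat.nth Nat.Prime (i : ℕ))

lemma count_lt_primeCounting {n q : ℕ} (hq : q.Prime) (hqn : q ≤ n) :
    Nat.count Nat.Prime q < Nat.primeCounting n := by
  have h1 : Nat.count Nat.Prime (q + 1) ≤ Nat.count Nat.Prime (n + 1) :=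
    Nat.count_monotone _ (by omega)
  rw [Nat.count_succ, if_pos hq] at h1
  have h2 : Nat.primeCounting n = Nat.count Nat.Prime (n + 1) := rfl
  omega

lemma weight_fac {n m : ℕ} (h1 : 1 ≤ m) (h2 : m ≤ n) :
    weight (fac (Nat.primeCounting n) m) = m := by
  classical
  set r := Nat.primeCounting n with hr
  have hm0 : m ≠ 0 := by omega
  have hinj : Set.InjOn (fun i : Fin r => Nat.nth Nat.Prime (i : ℕ))
      (Finset.univ : Finset (Fin r)) := by
    intro i _ j _ h
    exact Fin.ext (Nat.nth_injective Nat.infinite_setOf_prime h)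
  have hw : weight (fac r m)
      = ∏ q ∈ Finset.univ.image (fun i : Fin r => Nat.nth Nat.Prime (i : ℕ)),
          q ^ m.factorization q := by
    rw [Finset.prod_image hinj]
    rfl
  rw [hw]
  have hsub : m.primeFactors ⊆
      Finset.univ.image (fun i : Fin r => Nat.nth Nat.Prime (i : ℕ)) := by
    intro q hq
    rw [Nat.mem_primeFactors] at hq
    obtain ⟨hqp, hqd, -⟩ := hq
    have hqm : q ≤ m := Nat.le_of_dvd (by omega) hqd
    have hlt : Nat.count Nat.Prime q < r := count_lt_primeCounting hqp (hqm.trans h2)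
    refine Finset.mem_image.mpr ⟨⟨Nat.count Nat.Prime q, hlt⟩, Finset.mem_univ _, ?_⟩
    exact Nat.nth_count hqp
  rw [← Finset.prod_subset hsub]
  · conv_rhs => rw [← Nat.factorization_prod_pow_eq_self hm0]
    rw [Finsupp.prod, Nat.support_factorization]
  · intro q _ hq
    have h0 : m.factorization q = 0 := by
      rw [← Finsupp.notMem_support_iff, Nat.support_factorization]
      exact hq
    rw [h0, pow_zero]

/-- The evaluation algebra hom sending `x_i` to the indicator at the `i`-th prime. -/
noncomputable def psi (K : Type*) [Field K] (r : ℕ) :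
    MvPolynomial (Fin r) K →ₐ[K] ArithmeticFunction K :=
  MvPolynomial.aeval fun i : Fin r => delta K (Nat.nth Nat.Prime (i : ℕ))

lemma psi_monomial {r : ℕ} (d : Fin r →₀ ℕ) (c : K) :
    psi K r (MvPolynomial.monomial d c) = numThAlgMap K c * delta K (weight d) := by
  rw [psi, MvPolynomial.aeval_monomial, algebraMap_eq']
  congr 1
  rw [Finsupp.prod_fintype _ _ fun i => pow_zero _]
  calc ∏ i : Fin r, delta K (Nat.nth Nat.Prime (i : ℕ)) ^ d i
      = ∏ i : Fin r, deltaHom K (Nat.nth Nat.Prime (i : ℕ) ^ d i) := by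
        refine Finset.prod_congr rfl fun i _ => ?_
        rw [map_pow]; rfl
    _ = deltaHom K (∏ i : Fin r, Nat.nth Nat.Prime (i : ℕ) ^ d i) := (map_prod _ _ _).symm
    _ = delta K (weight d) := rfl

lemma delta_mem_J {n w : ℕ} (h : n < w) : delta K w ∈ Jideal K n := by
  intro m hm
  rw [delta_apply, if_neg]
  exact fun hc => absurd hc.1 (by omega)

lemma mem_J_iff {n : ℕ} (f : ArithmeticFunction K) :
    f ∈ Jideal K n ↔ ∀ m ≤ n, f m = 0 := Iff.rfl

end TruncAux

theorem truncation_algEquiv_polynomialQuotient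
    (K : Type*) [Field K] (n : ℕ) (hn : 1 ≤ n) :
    Nonempty ((ArithmeticFunction K ⧸ Jideal K n) ≃ₐ[K]
      (MvPolynomial (Fin (Nat.primeCounting n)) K ⧸
        truncIdeal K n (Nat.primeCounting n))) := by
  classical
  set r := Nat.primeCounting n with hr
  set φ : MvPolynomial (Fin r) K →ₐ[K] (ArithmeticFunction K ⧸ Jideal K n) :=
    (Ideal.Quotient.mkₐ K (Jideal K n)).comp (psi K r) with hφ
  have hφmk : ∀ P, φ P = Ideal.Quotient.mk (Jideal K n) (psi K r P) := fun P => rfl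
  -- surjectivity
  have hsurj : Function.Surjective φ := by
    intro y
    obtain ⟨f, rfl⟩ := Ideal.Quotient.mk_surjective y
    refine ⟨∑ m ∈ Finset.Icc 1 n, MvPolynomial.monomial (fac r m) (f m), ?_⟩
    rw [hφmk, map_sum, Ideal.Quotient.mk_eq_mk_iff_sub_mem]
    rw [mem_J_iff]
    intro k hk
    show evalAt K k (∑ m ∈ Finset.Icc 1 n,
        psi K r (MvPolynomial.monomial (fac r m) (f m)) - f) = 0
    rw [map_sub (evalAt K k), map_sum (evalAt K k)]
    have hterm : ∀ m ∈ Finset.Icc 1 n,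
        evalAt K k (psi K r (MvPolynomial.monomial (fac r m) (f m)))
          = if m = k then f k else 0 := by
      intro m hm
      rw [Finset.mem_Icc] at hm
      show (psi K r (MvPolynomial.monomial (fac r m) (f m))) k = _
      rw [psi_monomial, numThAlgMap_mul_apply, weight_fac hm.1 hm.2, delta_apply]
      by_cases hmk : m = k
      · subst hmk
        rw [if_pos ⟨rfl, by omega⟩, mul_one, if_pos rfl]
      · rw [if_neg fun hc => hmk hc.1.symm, mul_zero, if_neg hmk]
    rw [Finset.sum_congr rfl hterm, Finset.sum_ite_eq' (Finset.Icc 1 n) k fun _ => f k]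
    show _ - f k = 0
    by_cases hk0 : k = 0
    · subst hk0
      rw [if_neg (by simp), ArithmeticFunction.map_zero, sub_zero]
    · rw [if_pos (Finset.mem_Icc.mpr ⟨by omega, hk⟩), sub_self]
  -- kernel computation
  have hker : RingHom.ker φ = truncIdeal K n r := by
    apply le_antisymm
    · intro P hP
      rw [RingHom.mem_ker] at hP
      have hPJ : psi K r P ∈ Jideal K n := by
        rw [hφmk] at hP
        rwa [Ideal.Quotient.eq_zero_iff_mem] at hP
      set slow := P.support.filter (fun d => weight d ≤ n) with hslow
      set Plow : MvPolynomial (Fin r) K :=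
        ∑ d ∈ slow, MvPolynomial.monomial d (P.coeff d) with hPlow
      set Phigh : MvPolynomial (Fin r) K :=
        ∑ d ∈ P.support.filter (fun d => ¬ weight d ≤ n),
          MvPolynomial.monomial d (P.coeff d) with hPhigh
      have hsplit : Plow + Phigh = P := by
        rw [hPlow, hPhigh, Finset.sum_filter_add_sum_filter_not]
        exact (MvPolynomial.as_sum P).symm
      have hhigh_mem : Phigh ∈ truncIdeal K n r := by
        refine Ideal.sum_mem _ fun d hd => ?_
        rw [Finset.mem_filter] at hd
        have hgen : (MvPolynomial.monomial d (1 : K)) ∈ truncIdeal K n r :=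
          Ideal.subset_span ⟨d, by omega, rfl⟩
        have : MvPolynomial.monomial d (P.coeff d)
            = MvPolynomial.C (P.coeff d) * MvPolynomial.monomial d (1 : K) := by
          rw [MvPolynomial.C_mul_monomial, mul_one]
        rw [this]
        exact Ideal.mul_mem_left _ _ hgen
      have hhighJ : psi K r Phigh ∈ Jideal K n := by
        rw [hPhigh, map_sum]
        refine Ideal.sum_mem _ fun d hd => ?_
        rw [Finset.mem_filter] at hd
        rw [psi_monomial]
        exact Ideal.mul_mem_left _ _ (delta_mem_J (by omega))
      have hlowJ : psi K r Plow ∈ Jideal K n := by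
        have : psi K r Plow = psi K r P - psi K r Phigh := by
          rw [← hsplit, map_add]; ring
        rw [this]
        exact Ideal.sub_mem _ hPJ hhighJ
      have hcoeff : ∀ d0 ∈ slow, P.coeff d0 = 0 := by
        intro d0 hd0
        have hw0 : weight d0 ≤ n := (Finset.mem_filter.mp hd0).2
        have heval := (mem_J_iff _).mp hlowJ (weight d0) hw0
        rw [hPlow, map_sum] at heval
        have heval' : evalAt K (weight d0)
            (∑ x ∈ slow, psi K r (MvPolynomial.monomial x (MvPolynomial.coeff x P))) = 0 :=
          heval
        rw [map_sum (evalAt K (weight d0))] at heval'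
        have hterm : ∀ d ∈ slow,
            evalAt K (weight d0) (psi K r (MvPolynomial.monomial d (P.coeff d)))
              = if d = d0 then P.coeff d0 else 0 := by
          intro d _
          show (psi K r (MvPolynomial.monomial d (P.coeff d))) (weight d0) = _
          rw [psi_monomial, numThAlgMap_mul_apply, delta_apply]
          by_cases hdd : d = d0
          · subst hdd
            rw [if_pos ⟨rfl, (weight_pos d).ne'⟩, mul_one, if_pos rfl]
          · rw [if_neg, mul_zero, if_neg hdd]
            exact fun hc => hdd (weight_injective hc.1.symm)
        rw [Finset.sum_congr rfl hterm,
          Finset.sum_ite_eq' slow d0 fun _ => P.coeff d0, if_pos hd0] at heval'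
        exact heval'
      have hPlow0 : Plow = 0 := by
        rw [hPlow]
        refine Finset.sum_eq_zero fun d hd => ?_
        rw [hcoeff d hd, map_zero]
      rw [← hsplit, hPlow0, zero_add]
      exact hhigh_mem
    · rw [truncIdeal, Ideal.span_le]
      rintro _ ⟨d, hd, rfl⟩
      rw [SetLike.mem_coe, RingHom.mem_ker, hφmk, psi_monomial,
        Ideal.Quotient.eq_zero_iff_mem, map_one, one_mul]
      exact delta_mem_J hd
  exact ⟨((Ideal.quotientEquivAlgOfEq K hker).symm.trans
    (Ideal.quotientKerAlgEquivOfSurjective hsurj)).symm⟩
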